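/- arXiv:2505.05651 — 8 statements merged into one kernel-verified Lean document; each statement's English description precedes it below -/
import Mathlib

section
/- For every permutation π of {1,...,n}, the depth of π is at most its inversion number: ∑_{i : π(i) > i} (π(i) − i) ≤ #{(i,j) : i < j and π(i) > π(j)}. -/
/-! Of the `π i` indices `j` with `π j < π i`, at most `i` lie before `i` and none equals `i`, so at
least `π i - i` of them lie after `i` and form inversions `(i, j)`. Summing over the `i` with
`i < π i` counts each inversion at most once. -/

/-- The depth of a permutation: `∑_{i : π(i) > i} (π(i) − i)`. -/
def permDepth {n : ℕ} (π : Equiv.Perm (Fin n)) : ℕ :=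
  ∑ i ∈ Finset.univ.filter (fun i : Fin n => (i : ℕ) < (π i : ℕ)), ((π i : ℕ) - (i : ℕ))

/-- The inversion number (Coxeter length) of a permutation. -/
def permInv {n : ℕ} (π : Equiv.Perm (Fin n)) : ℕ :=
  (Finset.univ.filter (fun p : Fin n × Fin n => p.1 < p.2 ∧ π p.2 < π p.1)).card

open Finset

namespace Equiv.Perm

theorem card_filter_apply_lt {α : Type*} [Fintype α] [Preorder α] [LocallyFiniteOrderBot α]
    [DecidableLT α] (σ : Perm α) (a : α) : #{x | σ x < a} = #(Iio a) := by
  rw [← filter_gt_eq_Iio, ← card_map σ.toEmbedding, map_filter]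
  simp

variable {n : ℕ} (π : Perm (Fin n))

def inversionsFrom (i : Fin n) : Finset (Fin n) := {j | i < j ∧ π j < π i}

theorem sub_le_card_inversionsFrom (i : Fin n) : (π i : ℕ) - i ≤ #(π.inversionsFrom i) := by
  have hsplit : ({j | π j < π i} : Finset (Fin n)) ⊆ Iio i ∪ π.inversionsFrom i := by
    intro j hj
    rw [mem_filter] at hj
    rcases lt_trichotomy j i with hji | rfl | hij
    · exact mem_union_left _ (mem_Iio.2 hji)
    · exact absurd hj.2 (lt_irrefl _)
    · exact mem_union_right _ (mem_filter.2 ⟨mem_univ j, hij, hj.2⟩)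
  have hcard := (card_le_card hsplit).trans (card_union_le _ _)
  rw [card_filter_apply_lt, Fin.card_Iio, Fin.card_Iio] at hcard
  omega

theorem permInv_eq_sum_card_inversionsFrom : permInv π = ∑ i, #(π.inversionsFrom i) := by
  rw [permInv, card_filter, ← univ_product_univ, sum_product]
  simp only [inversionsFrom, card_filter]

end Equiv.Perm

/-- Upper bound of the Diaconis–Graham inequalities: depth ≤ inversion number. -/
theorem depth_le_inversions (n : ℕ) (π : Equiv.Perm (Fin n)) :
    permDepth π ≤ permInv π :=
  calc permDepth π ≤ ∑ i ∈ ({i | (i : ℕ) < π i} : Finset (Fin n)), #(π.inversionsFrom i) :=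
        sum_le_sum fun i _ => π.sub_le_card_inversionsFrom i
    _ ≤ ∑ i, #(π.inversionsFrom i) := sum_le_sum_of_subset (filter_subset _ _)
    _ = permInv π := π.permInv_eq_sum_card_inversionsFrom.symm
end

section
/- A permutation π ∈ S_n avoids the pattern 321 if and only if dp(π) = ℓ_S(π), i.e., ∑_{i : π(i) > i} (π(i) − i) equals the number of inversions of π. -/
/-- `π` avoids the pattern 321: no indices `i < j < k` with `π i > π j > π k`. -/
def Avoids321 {n : ℕ} (π : Equiv.Perm (Fin n)) : Prop :=
  ¬ ∃ i j k : Fin n, i < j ∧ j < k ∧ π k < π j ∧ π j < π i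

/-!
Fix a position `j`. Of the `π j` positions carrying a value below `π j`, those to the right of `j`
are the inversions starting at `j`, and at most `j` lie to the left of `j`. Hence
`π j - j ≤ #{k > j | π k < π j}`, with equality exactly when either every earlier value is smaller
than `π j` or every later value is larger, i.e. when `j` is not the middle of a 321 pattern.
Summing over `j`, the depth is at most the inversion number, with equality iff `π` avoids 321.
-/

open Finset

namespace Equiv.Perm

variable {n : ℕ} (π : Perm (Fin n)) (j : Fin n)

def invCountFrom : ℕ := #{k ∈ Ioi j | π k < π j}

def nonInvCountTo : ℕ := #{i ∈ Iio j | π i < π j}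

def IsMiddleOf321 : Prop := (∃ i < j, π j < π i) ∧ ∃ k > j, π k < π j

theorem card_apply_lt (x : Fin n) : #{m | π m < x} = x := by
  rw [← Fin.card_Iio x, ← filter_gt_eq_Iio]
  exact card_equiv π fun m => by simp

theorem invCountFrom_add_nonInvCountTo : π.invCountFrom j + π.nonInvCountTo j = π j := by
  rw [← card_apply_lt π (π j), ← card_filter_add_card_filter_not (s := {m | π m < π j}) (j < ·)]
  unfold invCountFrom nonInvCountTo
  congr 2 <;> ext m <;> simp only [mem_filter, mem_univ, mem_Ioi, mem_Iio, true_and, not_lt]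
  · exact and_comm
  · exact ⟨fun ⟨h, hlt⟩ => ⟨hlt, h.le⟩,
      fun ⟨hlt, h⟩ => ⟨h.lt_of_ne fun e => hlt.ne (congrArg π e), hlt⟩⟩

theorem nonInvCountTo_le : π.nonInvCountTo j ≤ j :=
  (card_filter_le _ _).trans (Fin.card_Iio j).le

theorem nonInvCountTo_eq_iff : π.nonInvCountTo j = j ↔ ¬∃ i < j, π j < π i := by
  rw [nonInvCountTo, ← Fin.card_Iio j, card_filter_eq_iff]
  simp only [mem_Iio, not_exists, not_and, not_lt]
  exact forall₂_congr fun i hi => (π.injective.ne hi.ne).le_iff_lt.symm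

theorem invCountFrom_eq_zero_iff : π.invCountFrom j = 0 ↔ ¬∃ k > j, π k < π j := by
  simp only [invCountFrom, card_filter_eq_zero_iff, mem_Ioi, not_exists, not_and]

theorem sub_le_invCountFrom : (π j : ℕ) - j ≤ π.invCountFrom j := by
  have := π.invCountFrom_add_nonInvCountTo j
  have := π.nonInvCountTo_le j
  omega

theorem sub_eq_invCountFrom_iff : (π j : ℕ) - j = π.invCountFrom j ↔ ¬π.IsMiddleOf321 j := by
  have := π.invCountFrom_add_nonInvCountTo j
  have := π.nonInvCountTo_le j
  rw [IsMiddleOf321, not_and_or, ← nonInvCountTo_eq_iff, ← invCountFrom_eq_zero_iff]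
  omega

end Equiv.Perm

section

variable {n : ℕ} (π : Equiv.Perm (Fin n))

theorem permDepth_eq_sum_sub : permDepth π = ∑ j, ((π j : ℕ) - j) :=
  sum_filter_of_ne fun _ _ h => Nat.lt_of_sub_ne_zero h

theorem permInv_eq_sum_invCountFrom : permInv π = ∑ j, π.invCountFrom j := by
  rw [permInv, card_filter, Fintype.sum_prod_type]
  refine sum_congr rfl fun j _ => ?_
  rw [Equiv.Perm.invCountFrom, ← card_filter]
  congr 1
  ext k
  simp

theorem avoids321_iff_forall_not_isMiddleOf321 : Avoids321 π ↔ ∀ j, ¬π.IsMiddleOf321 j :=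
  ⟨fun h j ⟨⟨i, hij, hi⟩, k, hjk, hk⟩ => h ⟨i, j, k, hij, hjk, hk, hi⟩,
    fun h ⟨i, j, k, hij, hjk, hk, hi⟩ => h j ⟨⟨i, hij, hi⟩, k, hjk, hk⟩⟩

end

/-- A permutation avoids 321 iff its depth equals its inversion number. -/
theorem avoids321_iff_depth_eq_inversions (n : ℕ) (π : Equiv.Perm (Fin n)) :
    Avoids321 π ↔ permDepth π = permInv π := by
  rw [permDepth_eq_sum_sub, permInv_eq_sum_invCountFrom,
    sum_eq_sum_iff_of_le fun j _ => π.sub_le_invCountFrom j,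
    avoids321_iff_forall_not_isMiddleOf321]
  simp only [mem_univ, forall_const, Equiv.Perm.sub_eq_invCountFrom_iff]
end

section
/- For all m, n ≥ 1, c_n · c_m ≤ c_{n+m}, where c_k denotes the number of k-cycles in S_k whose one-line notation avoids the pattern 321. -/
/-- `c k`: the number of `k`-cycles in `S_k` (permutations whose cycle
decomposition is a single cycle) avoiding 321 in one-line notation. -/
noncomputable def c321 (k : ℕ) : ℕ :=
  Nat.card {π : Equiv.Perm (Fin k) // (∀ x y : Fin k, π.SameCycle x y) ∧ Avoids321 π}

/-!
Given cyclic 321-avoiders `σ ∈ S_{n+1}` and `τ ∈ S_{m+1}`, take their direct sum and exchange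
the two middle values `n` and `n + 1` (0-indexed), i.e. multiply on the left by a transposition
of two points lying in different cycles: this merges the two cycles into one. After the exchange
each block is still order-isomorphic to `σ` resp. `τ`, and the only inversion between the blocks
is the pair of positions carrying the two exchanged values. A 321 pattern meeting both blocks
would need two distinct such inversions, so none exists. The construction is injective, whence
`c_n c_m ≤ c_{n+m}`.
-/

open Equiv

namespace Equiv.Perm

variable {α : Type*} [DecidableEq α] [Finite α] {f : Perm α} {P : α → Prop} {a b x : α}

/- Along the `f`-orbit from `x` to `a` the map `swap a b * f` agrees with `f`, because this orbit
stays in `P` and so avoids `b`; at its last step it sends `f⁻¹ a` to `b` instead of `a`. -/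
lemma sameCycle_swap_mul_of_sameCycle (hP : ∀ x, P x → P (f x)) (hb : ¬ P b) (hx : P x)
    (hxa : f.SameCycle x a) : (swap a b * f).SameCycle x b := by
  obtain ⟨_ | k, hk, -, hka⟩ := hxa.exists_pow_eq''
  · exact absurd hk (lt_irrefl 0)
  clear hk hxa
  induction k generalizing x with
  | zero => exact ⟨1, by simp_all⟩
  | succ k ih =>
    by_cases hfa : f x = a
    · exact ⟨1, by simp [hfa]⟩
    have hfb : f x ≠ b := fun h => hb (h ▸ hP x hx)
    have hstep : (swap a b * f).SameCycle x (f x) :=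
      ⟨1, by simpa using swap_apply_of_ne_of_ne hfa hfb⟩
    exact hstep.trans (ih (hP x hx) (by rwa [pow_succ, mul_apply] at hka))

lemma sameCycle_swap_mul_of_two_orbits (hP : ∀ x, P (f x) ↔ P x) (ha : P a) (hb : ¬ P b)
    (hA : ∀ x, P x → f.SameCycle x a) (hB : ∀ x, ¬ P x → f.SameCycle x b) (x y : α) :
    (swap a b * f).SameCycle x y := by
  have hab : (swap a b * f).SameCycle a b :=
    sameCycle_swap_mul_of_sameCycle (fun x => (hP x).2) hb ha SameCycle.rfl
  have hxb (x : α) : (swap a b * f).SameCycle x b := by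
    by_cases hx : P x
    · exact sameCycle_swap_mul_of_sameCycle (fun x => (hP x).2) hb hx (hA x hx)
    · have hxa := sameCycle_swap_mul_of_sameCycle (P := (¬ P ·)) (fun x => mt (hP x).1)
        (not_not.2 ha) hx (hB x hx)
      exact (swap_comm a b ▸ hxa).trans hab
  exact (hxb x).trans (hxb y).symm

end Equiv.Perm

open Equiv.Perm

lemma Fin.castAdd_lt_natAdd {n m : ℕ} (i : Fin n) (j : Fin m) :
    Fin.castAdd m i < Fin.natAdd n j :=
  i.isLt.trans_le (Nat.le_add_right n j)

section

variable {n m : ℕ}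

def blockPerm : Perm (Fin n) × Perm (Fin m) →* Perm (Fin (n + m)) :=
  finSumFinEquiv.permCongrHom.toMonoidHom.comp (sumCongrHom _ _)

@[simp]
lemma blockPerm_castAdd (p : Perm (Fin n) × Perm (Fin m)) (i : Fin n) :
    blockPerm p (Fin.castAdd m i) = Fin.castAdd m (p.1 i) := by
  simp [blockPerm, permCongr_apply]

@[simp]
lemma blockPerm_natAdd (p : Perm (Fin n) × Perm (Fin m)) (j : Fin m) :
    blockPerm p (Fin.natAdd n j) = Fin.natAdd n (p.2 j) := by
  simp [blockPerm, permCongr_apply]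

lemma blockPerm_injective : Function.Injective (blockPerm (n := n) (m := m)) :=
  finSumFinEquiv.permCongrHom.injective.comp sumCongrHom_injective

lemma Equiv.Perm.SameCycle.blockPerm_castAdd {σ : Perm (Fin n)} {i j : Fin n}
    (h : σ.SameCycle i j) (τ : Perm (Fin m)) :
    (blockPerm (σ, τ)).SameCycle (Fin.castAdd m i) (Fin.castAdd m j) := by
  obtain ⟨k, rfl⟩ := h
  exact ⟨k, by simp [← map_zpow]⟩

lemma Equiv.Perm.SameCycle.blockPerm_natAdd {τ : Perm (Fin m)} {i j : Fin m}
    (h : τ.SameCycle i j) (σ : Perm (Fin n)) :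
    (blockPerm (σ, τ)).SameCycle (Fin.natAdd n i) (Fin.natAdd n j) := by
  obtain ⟨k, rfl⟩ := h
  exact ⟨k, by simp [← map_zpow]⟩

def joinPerm (p : Perm (Fin (n + 1)) × Perm (Fin (m + 1))) : Perm (Fin (n + 1 + (m + 1))) :=
  swap (Fin.castAdd (m + 1) (Fin.last n)) (Fin.natAdd (n + 1) 0) * blockPerm p

lemma joinPerm_injective : Function.Injective (joinPerm (n := n) (m := m)) :=
  (mul_right_injective _).comp blockPerm_injective

lemma joinPerm_sameCycle {σ : Perm (Fin (n + 1))} {τ : Perm (Fin (m + 1))}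
    (hσ : ∀ x y, σ.SameCycle x y) (hτ : ∀ x y, τ.SameCycle x y) (x y : Fin (n + 1 + (m + 1))) :
    (joinPerm (σ, τ)).SameCycle x y := by
  refine sameCycle_swap_mul_of_two_orbits
    (P := fun x : Fin (n + 1 + (m + 1)) => (x : ℕ) < n + 1) (fun x => ?_) (by simp) (by simp)
    (fun x hx => ?_) (fun x hx => ?_) x y
  · cases x using Fin.addCases <;> simp [Fin.is_le]; omega
  · cases x using Fin.addCases with
    | left i => exact (hσ i _).blockPerm_castAdd τ
    | right j => simp at hx; omega
  · cases x using Fin.addCases with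
    | left i => simp at hx; omega
    | right j => exact (hτ j _).blockPerm_natAdd σ

section

variable (p : Perm (Fin (n + 1)) × Perm (Fin (m + 1)))

lemma joinPerm_castAdd_val (i : Fin (n + 1)) :
    (joinPerm p (Fin.castAdd (m + 1) i) : ℕ) = if p.1 i = Fin.last n then n + 1 else p.1 i := by
  simp only [joinPerm, Perm.mul_apply, blockPerm_castAdd, swap_apply_def]
  split_ifs <;>
    simp only [Fin.ext_iff, Fin.val_castAdd, Fin.val_natAdd, Fin.val_last, Fin.val_zero] at * <;>
    omega

lemma joinPerm_natAdd_val (j : Fin (m + 1)) :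
    (joinPerm p (Fin.natAdd (n + 1) j) : ℕ) = if p.2 j = 0 then n else n + 1 + p.2 j := by
  simp only [joinPerm, Perm.mul_apply, blockPerm_natAdd, swap_apply_def]
  split_ifs <;>
    simp only [Fin.ext_iff, Fin.val_castAdd, Fin.val_natAdd, Fin.val_last, Fin.val_zero] at * <;>
    omega

lemma joinPerm_castAdd_lt_castAdd_iff {i j : Fin (n + 1)} :
    joinPerm p (Fin.castAdd _ i) < joinPerm p (Fin.castAdd _ j) ↔ p.1 i < p.1 j := by
  rw [Fin.lt_def, Fin.lt_def, joinPerm_castAdd_val, joinPerm_castAdd_val]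
  have := (p.1 i).is_le
  have := (p.1 j).is_le
  split_ifs <;> simp only [Fin.ext_iff, Fin.val_last] at * <;> omega

lemma joinPerm_natAdd_lt_natAdd_iff {i j : Fin (m + 1)} :
    joinPerm p (Fin.natAdd _ i) < joinPerm p (Fin.natAdd _ j) ↔ p.2 i < p.2 j := by
  rw [Fin.lt_def, Fin.lt_def, joinPerm_natAdd_val, joinPerm_natAdd_val]
  split_ifs <;> simp only [Fin.ext_iff, Fin.val_zero] at * <;> omega

lemma joinPerm_natAdd_lt_castAdd {i : Fin (n + 1)} {j : Fin (m + 1)}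
    (h : joinPerm p (Fin.natAdd _ j) < joinPerm p (Fin.castAdd _ i)) :
    p.1 i = Fin.last n ∧ p.2 j = 0 := by
  rw [Fin.lt_def, joinPerm_natAdd_val, joinPerm_castAdd_val] at h
  have := (p.1 i).is_le
  split_ifs at h <;> simp only [Fin.ext_iff, Fin.val_zero, Fin.val_last] at * <;> omega

end

lemma avoids321_joinPerm {σ : Perm (Fin (n + 1))} {τ : Perm (Fin (m + 1))}
    (hσ : Avoids321 σ) (hτ : Avoids321 τ) : Avoids321 (joinPerm (σ, τ)) := by
  rintro ⟨i, j, k, hij, hjk, hkj, hji⟩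
  cases i using Fin.addCases with
  | left i => cases j using Fin.addCases with
    | left j => cases k using Fin.addCases with
      | left k =>
        exact hσ ⟨i, j, k, hij, hjk,
          (joinPerm_castAdd_lt_castAdd_iff _).1 hkj, (joinPerm_castAdd_lt_castAdd_iff _).1 hji⟩
      | right k =>
        have hσi := (joinPerm_natAdd_lt_castAdd _ (hkj.trans hji)).1
        have hσj := (joinPerm_natAdd_lt_castAdd _ hkj).1
        exact hij.ne (by rw [σ.injective (hσi.trans hσj.symm)])
    | right j => cases k using Fin.addCases with
      | left k => exact lt_asymm (Fin.castAdd_lt_natAdd k j) hjk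
      | right k =>
        have hτj := (joinPerm_natAdd_lt_castAdd _ hji).2
        have hτk := (joinPerm_natAdd_lt_castAdd _ (hkj.trans hji)).2
        exact hjk.ne (by rw [τ.injective (hτj.trans hτk.symm)])
  | right i => cases j using Fin.addCases with
    | left j => exact lt_asymm (Fin.castAdd_lt_natAdd j i) hij
    | right j => cases k using Fin.addCases with
      | left k => exact lt_asymm (Fin.castAdd_lt_natAdd k j) hjk
      | right k =>
        exact hτ ⟨i, j, k, (Fin.natAdd_lt_natAdd_iff _).1 hij, (Fin.natAdd_lt_natAdd_iff _).1 hjk,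
          (joinPerm_natAdd_lt_natAdd_iff _).1 hkj, (joinPerm_natAdd_lt_natAdd_iff _).1 hji⟩

end

/-- For all `n, m ≥ 1`, `c_n · c_m ≤ c_{n+m}`. -/
theorem c321_supermultiplicative (n m : ℕ) (hn : 1 ≤ n) (hm : 1 ≤ m) :
    c321 n * c321 m ≤ c321 (n + m) := by
  obtain ⟨n, rfl⟩ := Nat.exists_eq_add_of_le' hn
  obtain ⟨m, rfl⟩ := Nat.exists_eq_add_of_le' hm
  rw [c321, c321, c321, ← Nat.card_prod]
  refine Nat.card_le_card_of_injective
    (fun p => ⟨joinPerm (p.1.1, p.2.1), joinPerm_sameCycle p.1.2.1 p.2.2.1,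
      avoids321_joinPerm p.1.2.2 p.2.2.2⟩) fun p q h => ?_
  obtain ⟨hσ, hτ⟩ := Prod.mk.inj (joinPerm_injective (congrArg Subtype.val h))
  exact Prod.ext (Subtype.ext hσ) (Subtype.ext hτ)
end

section
/- The limit lim_{n→∞} (c_n)^{1/n} exists, where c_n is the number of 321-avoiding n-cycles. -/
open Filter

/-!
By Fekete's lemma applied to `-log c_n`, it suffices that `c_m c_n ≤ c_{m+n}` and `c_n ≤ 4 ^ n`.

For supermultiplicativity, take the direct sum of a 321-avoiding `m`-cycle and a 321-avoiding
`n`-cycle and exchange the values `m - 1` and `m`. The transposition joins the two cycles into one,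
and the result has exactly one inversion between the two blocks, while a 321 pattern meeting both
blocks would need two.

For the upper bound, a 321-avoiding permutation is determined by the positions and the values of its
left-to-right maxima: every other entry is the smallest value not used before it.
-/

open Equiv Equiv.Perm

theorem exists_tendsto_rpow_one_div_of_supermultiplicative {a : ℕ → ℝ} (ha : ∀ n, 0 < a n)
    (hmul : ∀ m n, a m * a n ≤ a (m + n)) {C : ℝ} (hC : ∀ n, a n ≤ C ^ n) :
    ∃ L, Tendsto (fun n : ℕ => a n ^ ((1 : ℝ) / n)) atTop (nhds L) := by
  set u : ℕ → ℝ := fun n => -Real.log (a n)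
  have hsub : Subadditive u := fun m n => by
    simp only [u, ← neg_add, neg_le_neg_iff, ← Real.log_mul (ha m).ne' (ha n).ne']
    exact Real.log_le_log (mul_pos (ha m) (ha n)) (hmul m n)
  have hbdd : BddBelow (Set.range fun n => u n / n) := by
    -- the absolute value covers `n = 0`, where `u 0 / 0 = 0`
    refine ⟨-|Real.log C|, ?_⟩
    rintro _ ⟨n, rfl⟩
    rcases n.eq_zero_or_pos with rfl | hn
    · simp
    have hlog : Real.log (a n) ≤ n * Real.log C := by
      rw [← Real.log_pow]
      exact Real.log_le_log (ha n) (hC n)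
    have hn' : (0 : ℝ) < n := by exact_mod_cast hn
    rw [le_div_iff₀ hn']
    linarith [mul_le_mul_of_nonneg_left (le_abs_self (Real.log C)) hn'.le]
  refine ⟨Real.exp (-hsub.lim), ?_⟩
  convert (Real.continuous_exp.tendsto _).comp (hsub.tendsto_lim hbdd).neg using 1
  ext n
  simp [u, Real.rpow_def_of_pos (ha n), div_eq_mul_inv]

namespace Equiv.Perm

variable {α : Type*} [DecidableEq α] {g : Perm α} {u v x : α}

theorem swap_mul_pow_apply_of_forall_ne {k : ℕ}
    (hne : ∀ i, 0 < i → i < k → (g ^ i) x ≠ u ∧ (g ^ i) x ≠ v) :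
    ∀ i < k, ((swap u v * g) ^ i) x = (g ^ i) x := by
  intro i hi
  induction i with
  | zero => rfl
  | succ i ih =>
    obtain ⟨hu, hv⟩ := hne (i + 1) i.succ_pos hi
    rw [pow_succ', mul_apply, ih (by omega), mul_apply, ← mul_apply g, ← pow_succ',
      swap_apply_of_ne_of_ne hu hv]

theorem SameCycle.swap_mul_of_not_sameCycle [Finite α] (hxu : g.SameCycle x u)
    (huv : ¬g.SameCycle u v) : (swap u v * g).SameCycle x v := by
  classical
  have hex : ∃ k, 0 < k ∧ (g ^ k) x = u := by
    obtain ⟨k, hk, -, hxk⟩ := hxu.exists_pow_eq''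
    exact ⟨k, hk, hxk⟩
  obtain ⟨k, ⟨hk, hxk⟩, hmin⟩ : ∃ k, (0 < k ∧ (g ^ k) x = u) ∧ ∀ i < k, ¬(0 < i ∧ (g ^ i) x = u) :=
    ⟨Nat.find hex, Nat.find_spec hex, fun _ => Nat.find_min hex⟩
  have hne : ∀ i, 0 < i → i < k → (g ^ i) x ≠ u ∧ (g ^ i) x ≠ v := fun i hi hik =>
    ⟨fun h => hmin i hik ⟨hi, h⟩, fun h => huv (hxu.symm.trans ⟨i, by rw [zpow_natCast, h]⟩)⟩
  obtain ⟨j, rfl⟩ : ∃ j, k = j + 1 := Nat.exists_eq_add_one_of_ne_zero hk.ne'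
  refine ⟨((j + 1 : ℕ) : ℤ), ?_⟩
  rw [zpow_natCast, pow_succ', mul_apply, swap_mul_pow_apply_of_forall_ne hne j (by omega),
    mul_apply, ← mul_apply g, ← pow_succ', hxk, swap_apply_left]

theorem sameCycle_swap_mul_of_forall [Finite α] (huv : ¬g.SameCycle u v)
    (h : ∀ x, g.SameCycle x u ∨ g.SameCycle x v) (x y : α) : (swap u v * g).SameCycle x y := by
  have hall : ∀ x, (swap u v * g).SameCycle x v := by
    intro x
    rcases h x with hx | hx
    · exact hx.swap_mul_of_not_sameCycle huv
    · have hxu := hx.swap_mul_of_not_sameCycle fun h => huv h.symm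
      rw [swap_comm] at hxu
      exact hxu.trans (SameCycle.rfl.swap_mul_of_not_sameCycle huv)
  exact (hall x).trans (hall y).symm

end Equiv.Perm

section PermFinAdd

variable {m n : ℕ}

def permFinAdd (m n : ℕ) : Perm (Fin m) × Perm (Fin n) →* Perm (Fin (m + n)) :=
  finSumFinEquiv.permCongrHom.toMonoidHom.comp (sumCongrHom (Fin m) (Fin n))

theorem permFinAdd_injective : Function.Injective (permFinAdd m n) :=
  finSumFinEquiv.permCongrHom.injective.comp sumCongrHom_injective

@[simp]
theorem permFinAdd_apply_castAdd (p : Perm (Fin m) × Perm (Fin n)) (x : Fin m) :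
    permFinAdd m n p (Fin.castAdd n x) = Fin.castAdd n (p.1 x) := by
  simp [permFinAdd, permCongrHom_coe, permCongr_apply]

@[simp]
theorem permFinAdd_apply_natAdd (p : Perm (Fin m) × Perm (Fin n)) (x : Fin n) :
    permFinAdd m n p (Fin.natAdd m x) = Fin.natAdd m (p.2 x) := by
  simp [permFinAdd, permCongrHom_coe, permCongr_apply]

theorem Equiv.Perm.SameCycle.permFinAdd_castAdd {σ : Perm (Fin m)} {x y : Fin m} (h : σ.SameCycle x y)
    (τ : Perm (Fin n)) :
    (permFinAdd m n (σ, τ)).SameCycle (Fin.castAdd n x) (Fin.castAdd n y) := by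
  obtain ⟨i, rfl⟩ := h
  exact ⟨i, by simp [← map_zpow]⟩

theorem Equiv.Perm.SameCycle.permFinAdd_natAdd (σ : Perm (Fin m)) {τ : Perm (Fin n)} {x y : Fin n}
    (h : τ.SameCycle x y) :
    (permFinAdd m n (σ, τ)).SameCycle (Fin.natAdd m x) (Fin.natAdd m y) := by
  obtain ⟨i, rfl⟩ := h
  exact ⟨i, by simp [← map_zpow]⟩

theorem not_sameCycle_permFinAdd_castAdd_natAdd (p : Perm (Fin m) × Perm (Fin n)) (x : Fin m)
    (y : Fin n) : ¬(permFinAdd m n p).SameCycle (Fin.castAdd n x) (Fin.natAdd m y) := by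
  rintro ⟨i, hi⟩
  rw [← map_zpow, permFinAdd_apply_castAdd, Fin.ext_iff] at hi
  simp only [Fin.val_castAdd, Fin.val_natAdd] at hi
  omega

end PermFinAdd

section LeftToRightMaxima

variable {n : ℕ}

def leftToRightMaxima (π : Perm (Fin n)) : Finset (Fin n) :=
  {i | ∀ j < i, π j < π i}

theorem Avoids321.le_of_notMem_leftToRightMaxima {π : Perm (Fin n)} (hπ : Avoids321 π)
    {i : Fin n} (hi : i ∉ leftToRightMaxima π) {v : Fin n} (hv : ∀ j < i, π j ≠ v) : π i ≤ v := by
  by_contra! hvi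
  obtain ⟨j, hji, hij⟩ : ∃ j < i, π i ≤ π j := by simpa [leftToRightMaxima] using hi
  obtain ⟨k, rfl⟩ := π.surjective v
  have hik : i < k := by
    rcases lt_trichotomy k i with hki | rfl | hik
    · exact absurd rfl (hv k hki)
    · exact absurd hvi (lt_irrefl _)
    · exact hik
  exact hπ ⟨j, i, k, hji, hik, hvi, hij.lt_of_ne (π.injective.ne hji.ne')⟩

theorem le_of_mem_leftToRightMaxima {π : Perm (Fin n)} {i : Fin n}
    (hi : i ∈ leftToRightMaxima π) {v : Fin n} (hv : v ∈ (leftToRightMaxima π).image π)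
    (hvi : ∀ j < i, π j ≠ v) : π i ≤ v := by
  obtain ⟨k, hk, rfl⟩ := Finset.mem_image.1 hv
  rcases lt_trichotomy k i with hki | rfl | hik
  · exact absurd rfl (hvi k hki)
  · exact le_rfl
  · exact ((Finset.mem_filter.1 hk).2 i hik).le

theorem Avoids321.eq_of_leftToRightMaxima_eq {π π' : Perm (Fin n)} (hπ : Avoids321 π)
    (hπ' : Avoids321 π') (hpos : leftToRightMaxima π = leftToRightMaxima π')
    (hval : (leftToRightMaxima π).image π = (leftToRightMaxima π').image π') : π = π' := by
  ext1 i
  induction i using WellFoundedLT.induction with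
  | _ i ih =>
  have fresh : ∀ σ ρ : Perm (Fin n), (∀ j < i, σ j = ρ j) → ∀ j < i, σ j ≠ ρ i :=
    fun σ ρ h j hj => (h j hj).trans_ne (ρ.injective.ne hj.ne)
  have hπi := fresh π π' ih
  have hπ'i := fresh π' π fun j hj => (ih j hj).symm
  by_cases hi : i ∈ leftToRightMaxima π
  · have hi' : i ∈ leftToRightMaxima π' := hpos ▸ hi
    exact le_antisymm
      (le_of_mem_leftToRightMaxima hi (hval ▸ Finset.mem_image_of_mem π' hi') hπi)
      (le_of_mem_leftToRightMaxima hi' (hval ▸ Finset.mem_image_of_mem π hi) hπ'i)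
  · have hi' : i ∉ leftToRightMaxima π' := hpos ▸ hi
    exact le_antisymm (hπ.le_of_notMem_leftToRightMaxima hi hπi)
      (hπ'.le_of_notMem_leftToRightMaxima hi' hπ'i)

theorem card_avoids321_le (n : ℕ) : Nat.card {π : Perm (Fin n) // Avoids321 π} ≤ 4 ^ n := by
  have hinj : Function.Injective fun π : {π : Perm (Fin n) // Avoids321 π} =>
      (leftToRightMaxima π.1, (leftToRightMaxima π.1).image π.1) := fun π π' h =>
    Subtype.ext (π.2.eq_of_leftToRightMaxima_eq π'.2 (Prod.ext_iff.1 h).1 (Prod.ext_iff.1 h).2)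
  calc Nat.card {π : Perm (Fin n) // Avoids321 π}
      ≤ Nat.card (Finset (Fin n) × Finset (Fin n)) := Nat.card_le_card_of_injective _ hinj
    _ = 4 ^ n := by simp [Nat.card_eq_fintype_card, ← mul_pow]

end LeftToRightMaxima

theorem avoids321_finRotate (n : ℕ) : Avoids321 (finRotate n) := by
  rintro ⟨i, j, k, hij, hjk, -, hji⟩
  cases n with
  | zero => exact i.elim0
  | succ n =>
    have hj : j ≠ Fin.last n := (hjk.trans_le (Fin.le_last k)).ne
    have hi : i ≠ Fin.last n := (hij.trans_le (Fin.le_last j)).ne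
    rw [Fin.lt_def, coe_finRotate_of_ne_last hj, coe_finRotate_of_ne_last hi] at hji
    omega

theorem sameCycle_finRotate {n : ℕ} (x y : Fin n) : (finRotate n).SameCycle x y := by
  have := NeZero.of_pos x.pos
  refine ⟨(y - x).val, ?_⟩
  rw [zpow_natCast, ← iterate_eq_pow, ← finCycle_eq_finRotate_iterate, finCycle_apply,
    add_sub_cancel]

section MergeCycles

variable {m n : ℕ} (σ : Perm (Fin (m + 1))) (τ : Perm (Fin (n + 1)))

def mergeCycles : Perm (Fin (m + 1 + (n + 1))) :=
  swap (Fin.castAdd (n + 1) (Fin.last m)) (Fin.natAdd (m + 1) 0) * permFinAdd _ _ (σ, τ)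

theorem val_mergeCycles_castAdd (x : Fin (m + 1)) :
    (mergeCycles σ τ (Fin.castAdd _ x) : ℕ) = if σ x = Fin.last m then m + 1 else σ x := by
  simp only [mergeCycles, mul_apply, permFinAdd_apply_castAdd, swap_apply_def]
  split_ifs <;> simp only [Fin.ext_iff, Fin.val_castAdd, Fin.val_natAdd, Fin.val_last,
    Fin.val_zero] at * <;> omega

theorem val_mergeCycles_natAdd (y : Fin (n + 1)) :
    (mergeCycles σ τ (Fin.natAdd _ y) : ℕ) = if τ y = 0 then m else m + 1 + τ y := by
  simp only [mergeCycles, mul_apply, permFinAdd_apply_natAdd, swap_apply_def]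
  split_ifs <;> simp only [Fin.ext_iff, Fin.val_castAdd, Fin.val_natAdd, Fin.val_last,
    Fin.val_zero] at * <;> omega

theorem mergeCycles_castAdd_lt_castAdd_iff {a b : Fin (m + 1)} :
    mergeCycles σ τ (Fin.castAdd _ a) < mergeCycles σ τ (Fin.castAdd _ b) ↔ σ a < σ b := by
  simp only [Fin.lt_def, val_mergeCycles_castAdd]
  split_ifs <;> simp only [Fin.ext_iff, Fin.val_last] at * <;> omega

theorem mergeCycles_natAdd_lt_natAdd_iff {a b : Fin (n + 1)} :
    mergeCycles σ τ (Fin.natAdd _ a) < mergeCycles σ τ (Fin.natAdd _ b) ↔ τ a < τ b := by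
  simp only [Fin.lt_def, val_mergeCycles_natAdd]
  split_ifs <;> simp only [Fin.ext_iff, Fin.val_zero] at * <;> omega

theorem eq_last_and_eq_zero_of_mergeCycles_natAdd_lt_castAdd {a : Fin (m + 1)} {b : Fin (n + 1)}
    (h : mergeCycles σ τ (Fin.natAdd _ b) < mergeCycles σ τ (Fin.castAdd _ a)) :
    σ a = Fin.last m ∧ τ b = 0 := by
  rw [Fin.lt_def, val_mergeCycles_castAdd, val_mergeCycles_natAdd] at h
  split_ifs at h <;> simp only [Fin.ext_iff, Fin.val_last, Fin.val_zero] at * <;> omega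

variable {σ τ}

theorem mergeCycles_inj {σ' : Perm (Fin (m + 1))} {τ' : Perm (Fin (n + 1))} :
    mergeCycles σ τ = mergeCycles σ' τ' ↔ σ = σ' ∧ τ = τ' :=
  ⟨fun h => Prod.ext_iff.1 (permFinAdd_injective (mul_left_cancel h)), fun ⟨h, h'⟩ => h ▸ h' ▸ rfl⟩

theorem sameCycle_mergeCycles (hσ : ∀ x y, σ.SameCycle x y) (hτ : ∀ x y, τ.SameCycle x y)
    (x y : Fin (m + 1 + (n + 1))) : (mergeCycles σ τ).SameCycle x y := by
  refine sameCycle_swap_mul_of_forall (not_sameCycle_permFinAdd_castAdd_natAdd _ _ _)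
    (fun z => ?_) x y
  induction z using Fin.addCases with
  | left z => exact .inl ((hσ z _).permFinAdd_castAdd τ)
  | right z => exact .inr ((hτ z _).permFinAdd_natAdd σ)

theorem avoids321_mergeCycles (hσ : Avoids321 σ) (hτ : Avoids321 τ) :
    Avoids321 (mergeCycles σ τ) := by
  rintro ⟨i, j, k, hij, hjk, hkj, hji⟩
  induction i using Fin.addCases with
  | left i =>
    induction j using Fin.addCases with
    | left j =>
      induction k using Fin.addCases with
      | left k =>
        exact hσ ⟨i, j, k, hij, hjk, (mergeCycles_castAdd_lt_castAdd_iff σ τ).1 hkj,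
          (mergeCycles_castAdd_lt_castAdd_iff σ τ).1 hji⟩
      | right k =>
        have hj := eq_last_and_eq_zero_of_mergeCycles_natAdd_lt_castAdd σ τ hkj
        have hi := eq_last_and_eq_zero_of_mergeCycles_natAdd_lt_castAdd σ τ (hkj.trans hji)
        exact hij.ne (by simpa using σ.injective (hi.1.trans hj.1.symm))
    | right j =>
      induction k using Fin.addCases with
      | left k => simp [Fin.lt_def] at hjk; omega
      | right k =>
        have hj := eq_last_and_eq_zero_of_mergeCycles_natAdd_lt_castAdd σ τ hji
        have hk := eq_last_and_eq_zero_of_mergeCycles_natAdd_lt_castAdd σ τ (hkj.trans hji)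
        exact hjk.ne (by simpa using τ.injective (hj.2.trans hk.2.symm))
  | right i =>
    induction j using Fin.addCases with
    | left j => simp [Fin.lt_def] at hij; omega
    | right j =>
      induction k using Fin.addCases with
      | left k => simp [Fin.lt_def] at hjk; omega
      | right k =>
        exact hτ ⟨i, j, k, by simpa using hij, by simpa using hjk,
          (mergeCycles_natAdd_lt_natAdd_iff σ τ).1 hkj, (mergeCycles_natAdd_lt_natAdd_iff σ τ).1 hji⟩

end MergeCycles

theorem c321_pos (n : ℕ) : 0 < c321 n :=
  Nat.card_pos_iff.2 ⟨⟨⟨finRotate n, sameCycle_finRotate, avoids321_finRotate n⟩⟩, inferInstance⟩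

theorem c321_zero : c321 0 = 1 := by
  rw [c321, Nat.card_eq_one_iff_unique]
  exact ⟨inferInstance, ⟨⟨1, fun x => x.elim0, fun ⟨i, _⟩ => i.elim0⟩⟩⟩

theorem c321_le_four_pow (n : ℕ) : c321 n ≤ 4 ^ n :=
  (Nat.card_le_card_of_injective _ (Subtype.impEmbedding _ _ fun _ h => h.2).injective).trans (card_avoids321_le n)

theorem c321_succ_mul_c321_succ_le (m n : ℕ) :
    c321 (m + 1) * c321 (n + 1) ≤ c321 (m + 1 + (n + 1)) := by
  rw [c321, c321, c321, ← Nat.card_prod]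
  refine Nat.card_le_card_of_injective (fun p => ⟨mergeCycles p.1.1 p.2.1,
    sameCycle_mergeCycles p.1.2.1 p.2.2.1, avoids321_mergeCycles p.1.2.2 p.2.2.2⟩) ?_
  rintro ⟨⟨σ, _⟩, ⟨τ, _⟩⟩ ⟨⟨σ', _⟩, ⟨τ', _⟩⟩ h
  obtain ⟨rfl, rfl⟩ := mergeCycles_inj.1 (Subtype.ext_iff.1 h)
  rfl

theorem c321_mul_le (m n : ℕ) : c321 m * c321 n ≤ c321 (m + n) := by
  cases m with
  | zero => simp [c321_zero]
  | succ m =>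
    cases n with
    | zero => simp [c321_zero]
    | succ n => exact c321_succ_mul_c321_succ_le m n

/-- The limit `lim_{n→∞} (c_n)^{1/n}` exists. -/
theorem c321_growth_rate_exists :
    ∃ L : ℝ, Tendsto (fun n : ℕ => (c321 n : ℝ) ^ ((1 : ℝ) / n)) atTop (nhds L) :=
  exists_tendsto_rpow_one_div_of_supermultiplicative (fun n => by exact_mod_cast c321_pos n)
    (fun m n => by exact_mod_cast c321_mul_le m n) (C := 4)
    (fun n => by exact_mod_cast c321_le_four_pow n)
end

section
/- For n ≥ 2, the number of 321-avoiding n-cycles satisfies c_n ≥ 2^{n−2}. -/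
open Finset Equiv

namespace Finset

variable {α : Type*} [LinearOrder α] [Fintype α]

def upDownList (E : Finset α) : List α := E.sort ++ Eᶜ.sort (· ≥ ·)

variable (E : Finset α)

theorem nodup_upDownList : E.upDownList.Nodup :=
  (E.sort_nodup _).append (Eᶜ.sort_nodup _) fun x hx hx' => by
    simp only [mem_sort, mem_compl] at hx hx'
    exact hx' hx

theorem mem_upDownList (x : α) : x ∈ E.upDownList := by
  simp [upDownList, em]

theorem length_upDownList : E.upDownList.length = Fintype.card α := by
  simp [upDownList, card_add_card_compl]

variable {E} {i j : ℕ}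

theorem upDownList_getElem_of_lt_card (hi : i < E.upDownList.length) (h : i < #E) :
    E.upDownList[i] = E.sort[i]'(by simpa using h) :=
  List.getElem_append_left _

theorem upDownList_getElem_of_card_le (hi : i < E.upDownList.length) (h : #E ≤ i) :
    E.upDownList[i] = (Eᶜ.sort (· ≥ ·))[i - #E]'(by
      simp only [upDownList, List.length_append, length_sort] at hi ⊢; omega) := by
  simp [upDownList, List.getElem_append_right, h]

theorem upDownList_getElem_mem_iff (hi : i < E.upDownList.length) :
    E.upDownList[i] ∈ E ↔ i < #E := by
  rcases lt_or_ge i #E with h | h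
  · simp [upDownList_getElem_of_lt_card hi h, h, ← mem_sort (· ≤ ·)]
  · rw [upDownList_getElem_of_card_le hi h, iff_false_intro (not_lt.2 h), iff_false,
      ← mem_compl, ← mem_sort (· ≥ ·)]
    exact List.getElem_mem _

theorem upDownList_getElem_lt_getElem_iff_of_lt_card (hi : i < E.upDownList.length)
    (hj : j < E.upDownList.length) (hiE : i < #E) (hjE : j < #E) :
    E.upDownList[i] < E.upDownList[j] ↔ i < j := by
  rw [upDownList_getElem_of_lt_card hi hiE, upDownList_getElem_of_lt_card hj hjE]
  exact (sortedLT_sort E).getElem_lt_getElem_iff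

theorem upDownList_getElem_lt_getElem_iff_of_card_le (hi : i < E.upDownList.length)
    (hj : j < E.upDownList.length) (hiE : #E ≤ i) (hjE : #E ≤ j) :
    E.upDownList[i] < E.upDownList[j] ↔ j < i := by
  rw [upDownList_getElem_of_card_le hi hiE, upDownList_getElem_of_card_le hj hjE,
    (sortedGT_sort Eᶜ).getElem_lt_getElem_iff]
  omega

theorem card_lt_length_upDownList [OrderTop α] (htop : ⊤ ∉ E) : #E < E.upDownList.length :=
  E.length_upDownList ▸ card_lt_univ_of_notMem htop

theorem upDownList_getElem_card [OrderTop α] (htop : ⊤ ∉ E) :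
    E.upDownList[#E]'(card_lt_length_upDownList htop) = ⊤ := by
  obtain ⟨k, hk, hk_top⟩ := List.getElem_of_mem (E.mem_upDownList ⊤)
  have hEk : #E ≤ k := not_lt.1 fun h => htop (hk_top ▸ (upDownList_getElem_mem_iff hk).2 h)
  by_contra hne
  have := (upDownList_getElem_lt_getElem_iff_of_card_le _ hk le_rfl hEk).1
    (hk_top ▸ Ne.lt_top hne)
  omega

theorem upDownList_getElem_zero [OrderBot α] (hbot : ⊥ ∈ E) (h : 0 < E.upDownList.length) :
    E.upDownList[0] = ⊥ := by
  obtain ⟨k, hk, hk_bot⟩ := List.getElem_of_mem (E.mem_upDownList ⊥)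
  have hkE : k < #E := (upDownList_getElem_mem_iff hk).1 (hk_bot ▸ hbot)
  by_contra hne
  have := (upDownList_getElem_lt_getElem_iff_of_lt_card hk h hkE (by omega)).1
    (hk_bot ▸ Ne.bot_lt hne)
  omega

def upDownCycle (E : Finset α) : Perm α := E.upDownList.formPerm

theorem upDownCycle_getElem (h : i + 1 < E.upDownList.length) :
    E.upDownCycle (E.upDownList[i]'(by omega)) = E.upDownList[i + 1] := by
  rw [upDownCycle, List.formPerm_apply_getElem _ E.nodup_upDownList]
  simp only [Nat.mod_eq_of_lt h]

theorem upDownCycle_getElem_of_add_one_eq (h : i + 1 = E.upDownList.length) :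
    E.upDownCycle (E.upDownList[i]'(by omega)) = E.upDownList[0]'(by omega) := by
  rw [upDownCycle, List.formPerm_apply_getElem _ E.nodup_upDownList]
  simp only [h, Nat.mod_self]

theorem sameCycle_upDownCycle (E : Finset α) (x y : α) : E.upDownCycle.SameCycle x y := by
  rcases lt_or_ge E.upDownList.length 2 with h | h
  · have : Subsingleton α := Fintype.card_le_one_iff_subsingleton.1 (by
      rw [← E.length_upDownList]; omega)
    exact Subsingleton.elim x y ▸ Perm.SameCycle.refl _ x
  · have hne (z : α) : E.upDownCycle z ≠ z :=
      (List.formPerm_apply_mem_ne_self_iff _ E.nodup_upDownList z (E.mem_upDownList z)).2 h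
    exact (List.isCycle_formPerm E.nodup_upDownList h).sameCycle (hne x) (hne y)

theorem lt_upDownCycle_of_mem [OrderTop α] (htop : ⊤ ∉ E) {x : α} (hx : x ∈ E) :
    x < E.upDownCycle x := by
  obtain ⟨i, hi, rfl⟩ := List.getElem_of_mem (E.mem_upDownList x)
  have hiE := (upDownList_getElem_mem_iff hi).1 hx
  have hlen := card_lt_length_upDownList htop
  rw [upDownCycle_getElem (by omega)]
  rcases (Nat.succ_le_of_lt hiE).lt_or_eq with h | h
  · exact (upDownList_getElem_lt_getElem_iff_of_lt_card _ _ hiE h).2 (lt_add_one i)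
  · have htop' : E.upDownList[i + 1] = ⊤ := by rw [← upDownList_getElem_card htop]; congr
    exact htop' ▸ (ne_of_mem_of_not_mem hx htop).lt_top

theorem upDownCycle_lt_of_notMem [OrderBot α] (hbot : ⊥ ∈ E) {x : α} (hx : x ∉ E) :
    E.upDownCycle x < x := by
  obtain ⟨i, hi, rfl⟩ := List.getElem_of_mem (E.mem_upDownList x)
  have hiE := not_lt.1 <| mt (upDownList_getElem_mem_iff hi).2 hx
  rcases (Nat.succ_le_of_lt hi).lt_or_eq with h | h
  · rw [upDownCycle_getElem h]
    exact (upDownList_getElem_lt_getElem_iff_of_card_le _ _ (by omega) hiE).2 (lt_add_one i)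
  · rw [upDownCycle_getElem_of_add_one_eq h, upDownList_getElem_zero hbot]
    exact (ne_of_mem_of_not_mem hbot hx).symm.bot_lt

theorem mem_iff_lt_upDownCycle [BoundedOrder α] (hbot : ⊥ ∈ E) (htop : ⊤ ∉ E) {x : α} :
    x ∈ E ↔ x < E.upDownCycle x :=
  ⟨lt_upDownCycle_of_mem htop, fun h =>
    by_contra fun hx => (upDownCycle_lt_of_notMem hbot hx).not_gt h⟩

theorem upDownCycle_injOn [BoundedOrder α] :
    Set.InjOn upDownCycle {E : Finset α | ⊥ ∈ E ∧ ⊤ ∉ E} := by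
  rintro E ⟨hEbot, hEtop⟩ F ⟨hFbot, hFtop⟩ h
  ext x
  rw [mem_iff_lt_upDownCycle hEbot hEtop, mem_iff_lt_upDownCycle hFbot hFtop, h]

theorem strictMonoOn_upDownCycle [OrderTop α] (htop : ⊤ ∉ E) :
    StrictMonoOn E.upDownCycle E := by
  intro x hx y hy hxy
  obtain ⟨i, hi, rfl⟩ := List.getElem_of_mem (E.mem_upDownList x)
  obtain ⟨j, hj, rfl⟩ := List.getElem_of_mem (E.mem_upDownList y)
  have hiE := (upDownList_getElem_mem_iff hi).1 hx
  have hjE := (upDownList_getElem_mem_iff hj).1 hy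
  have hij := (upDownList_getElem_lt_getElem_iff_of_lt_card hi hj hiE hjE).1 hxy
  have hlen := card_lt_length_upDownList htop
  rw [upDownCycle_getElem (by omega), upDownCycle_getElem (by omega)]
  rcases (Nat.succ_le_of_lt hjE).lt_or_eq with h | h
  · exact (upDownList_getElem_lt_getElem_iff_of_lt_card _ _ (by omega) h).2 (by omega)
  · have htop' : E.upDownList[j + 1] = ⊤ := by rw [← upDownList_getElem_card htop]; congr
    refine htop' ▸ Ne.lt_top fun heq => ?_
    have := E.nodup_upDownList.getElem_inj_iff.1 (heq.trans htop'.symm)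
    omega

theorem strictMonoOn_upDownCycle_compl [OrderBot α] (hbot : ⊥ ∈ E) :
    StrictMonoOn E.upDownCycle ↑Eᶜ := by
  intro x hx y hy hxy
  obtain ⟨i, hi, rfl⟩ := List.getElem_of_mem (E.mem_upDownList x)
  obtain ⟨j, hj, rfl⟩ := List.getElem_of_mem (E.mem_upDownList y)
  have hiE := not_lt.1 <| mt (upDownList_getElem_mem_iff hi).2 (mem_compl.1 hx)
  have hjE := not_lt.1 <| mt (upDownList_getElem_mem_iff hj).2 (mem_compl.1 hy)
  have hji := (upDownList_getElem_lt_getElem_iff_of_card_le hi hj hiE hjE).1 hxy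
  rw [upDownCycle_getElem (i := j) (by omega)]
  rcases (Nat.succ_le_of_lt hi).lt_or_eq with h | h
  · rw [upDownCycle_getElem h]
    exact (upDownList_getElem_lt_getElem_iff_of_card_le _ _ (by omega) (by omega)).2 (by omega)
  · rw [upDownCycle_getElem_of_add_one_eq h, upDownList_getElem_zero hbot]
    refine Ne.bot_lt fun heq => ?_
    have := E.nodup_upDownList.getElem_inj_iff.1
      (heq.trans (upDownList_getElem_zero hbot (by omega)).symm)
    omega

end Finset

theorem avoids321_of_strictMonoOn {n : ℕ} {π : Perm (Fin n)} (S : Set (Fin n))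
    (hS : StrictMonoOn π S) (hSc : StrictMonoOn π Sᶜ) : Avoids321 π := by
  have split {x y : Fin n} (hxy : x < y) (hyx : π y < π x) : x ∈ S ↔ y ∉ S :=
    ⟨fun hx hy => (hS hx hy hxy).not_gt hyx,
      fun hy => by_contra fun hx => (hSc hx hy hxy).not_gt hyx⟩
  rintro ⟨i, j, k, hij, hjk, hkj, hji⟩
  have := split hij hji
  have := split hjk hkj
  have := split (hij.trans hjk) (hkj.trans hji)
  tauto

theorem avoids321_upDownCycle {n : ℕ} [NeZero n] {E : Finset (Fin n)} (hbot : ⊥ ∈ E)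
    (htop : ⊤ ∉ E) : Avoids321 E.upDownCycle :=
  avoids321_of_strictMonoOn E (strictMonoOn_upDownCycle htop)
    (by simpa using strictMonoOn_upDownCycle_compl hbot)

theorem two_pow_card_sub_two_le_card_bot_mem_top_notMem {β : Type*} [PartialOrder β]
    [BoundedOrder β] [Nontrivial β] [Fintype β] [DecidableEq β] :
    2 ^ (Fintype.card β - 2) ≤ Nat.card {E : Finset β // ⊥ ∈ E ∧ ⊤ ∉ E} := by
  have bot_top_notMem {B : Finset β} (hB : B ∈ (({⊥, ⊤}ᶜ : Finset β).powerset : Set _)) :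
      ⊥ ∉ B ∧ ⊤ ∉ B := by
    rwa [mem_coe, mem_powerset, subset_compl_iff_disjoint_right, disjoint_insert_right,
      disjoint_singleton_right] at hB
  rw [Nat.card_eq_fintype_card, Fintype.card_subtype]
  calc 2 ^ (Fintype.card β - 2) = #({⊥, ⊤}ᶜ : Finset β).powerset := by
        rw [card_powerset, card_compl, card_pair bot_ne_top]
    _ ≤ #{E : Finset β | ⊥ ∈ E ∧ ⊤ ∉ E} := by
      refine card_le_card_of_injOn (insert ⊥) (fun B hB => ?_) (fun B hB C hC h => ?_)
      · simp [(bot_top_notMem hB).2, bot_ne_top.symm]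
      · rw [← erase_insert (bot_top_notMem hB).1, ← erase_insert (bot_top_notMem hC).1, h]

/-- For `n ≥ 2`, `c_n ≥ 2^{n−2}`. -/
theorem c321_lower_bound (n : ℕ) (hn : 2 ≤ n) : 2 ^ (n - 2) ≤ c321 n := by
  have : NeZero n := ⟨by omega⟩
  have : Nontrivial (Fin n) := Fin.nontrivial_iff_two_le.2 hn
  let f (E : {E : Finset (Fin n) // ⊥ ∈ E ∧ ⊤ ∉ E}) :
      {π : Perm (Fin n) // (∀ x y, π.SameCycle x y) ∧ Avoids321 π} :=
    ⟨E.1.upDownCycle, E.1.sameCycle_upDownCycle, avoids321_upDownCycle E.2.1 E.2.2⟩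
  have hf : Function.Injective f := fun E F h =>
    Subtype.ext (upDownCycle_injOn E.2 F.2 (congrArg Subtype.val h))
  calc 2 ^ (n - 2) ≤ Nat.card {E : Finset (Fin n) // ⊥ ∈ E ∧ ⊤ ∉ E} := by
        simpa using two_pow_card_sub_two_le_card_bot_mem_top_notMem (β := Fin n)
    _ ≤ c321 n := Nat.card_le_card_of_injective f hf
end

section
/- Every permutation π ∈ S_n of one-line form π = π_1…π_{k−1} 1 π_{k+1}…π_n with π_1 > π_2 > … > π_{k−1} > 1 and π_{k+1} < π_{k+2} < … < π_n avoids the vincular patterns ⟨32⟩⟨41⟩, ⟨14⟩⟨23⟩, ⟨41⟩⟨32⟩, ⟨23⟩⟨14⟩, ⟨23⟩·⟨1⟩(final), and ⟨1⟩(initial)·⟨32⟩. -/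
/-- Occurrence of the vincular pattern ⟨32⟩⟨41⟩: two disjoint adjacent pairs, in this
order, order-isomorphic to 3241. -/
def P3241 {n : ℕ} (π : Equiv.Perm (Fin n)) : Prop :=
  ∃ i i' j j' : Fin n, (i' : ℕ) = (i : ℕ) + 1 ∧ (j' : ℕ) = (j : ℕ) + 1 ∧
    (i' : ℕ) < (j : ℕ) ∧ π j' < π i' ∧ π i' < π i ∧ π i < π j

/-- Occurrence of the vincular pattern ⟨14⟩⟨23⟩. -/
def P1423 {n : ℕ} (π : Equiv.Perm (Fin n)) : Prop :=
  ∃ i i' j j' : Fin n, (i' : ℕ) = (i : ℕ) + 1 ∧ (j' : ℕ) = (j : ℕ) + 1 ∧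
    (i' : ℕ) < (j : ℕ) ∧ π i < π j ∧ π j < π j' ∧ π j' < π i'

/-- Occurrence of the vincular pattern ⟨41⟩⟨32⟩. -/
def P4132 {n : ℕ} (π : Equiv.Perm (Fin n)) : Prop :=
  ∃ i i' j j' : Fin n, (i' : ℕ) = (i : ℕ) + 1 ∧ (j' : ℕ) = (j : ℕ) + 1 ∧
    (i' : ℕ) < (j : ℕ) ∧ π i' < π j' ∧ π j' < π j ∧ π j < π i

/-- Occurrence of the vincular pattern ⟨23⟩⟨14⟩. -/
def P2314 {n : ℕ} (π : Equiv.Perm (Fin n)) : Prop :=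
  ∃ i i' j j' : Fin n, (i' : ℕ) = (i : ℕ) + 1 ∧ (j' : ℕ) = (j : ℕ) + 1 ∧
    (i' : ℕ) < (j : ℕ) ∧ π j < π i ∧ π i < π i' ∧ π i' < π j'

/-- Occurrence of the vincular pattern ⟨23⟩⟨1⟩ where the `1` must be the final
entry of `π`. -/
def P231final {n : ℕ} (π : Equiv.Perm (Fin n)) : Prop :=
  ∃ i i' l : Fin n, (i' : ℕ) = (i : ℕ) + 1 ∧ (l : ℕ) = n - 1 ∧
    (i' : ℕ) < (l : ℕ) ∧ π l < π i ∧ π i < π i'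

/-- Occurrence of the vincular pattern ⟨1⟩⟨32⟩ where the `1` must be the first
entry of `π`. -/
def P132initial {n : ℕ} (π : Equiv.Perm (Fin n)) : Prop :=
  ∃ f j j' : Fin n, (f : ℕ) = 0 ∧ (j' : ℕ) = (j : ℕ) + 1 ∧
    0 < (j : ℕ) ∧ π f < π j' ∧ π j' < π j

/-- `π` avoids all six vincular patterns
⟨32⟩⟨41⟩, ⟨14⟩⟨23⟩, ⟨41⟩⟨32⟩, ⟨23⟩⟨14⟩, ⟨23⟩⟨1 final⟩, ⟨1 initial⟩⟨32⟩. -/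
def MemA {n : ℕ} (π : Equiv.Perm (Fin n)) : Prop :=
  ¬ P3241 π ∧ ¬ P1423 π ∧ ¬ P4132 π ∧ ¬ P2314 π ∧ ¬ P231final π ∧ ¬ P132initial π

/-! With `k` the position of the minimum, an adjacent ascent `π i < π (i+1)` forces `k ≤ i`,
so `π` is increasing from `i` on, and an adjacent descent `π (i+1) < π i` forces `i + 1 ≤ k`,
so `π` is decreasing up to `i + 1`. Each of the six patterns contains such an adjacent pair
together with a comparison on the same monotone branch that goes the wrong way. -/

open Set

section Valley

variable {ι α : Type*} [LinearOrder ι] [Preorder α] {f : ι → α} {i j k : ι}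

theorem strictAntiOn_Iic_of_forall_lt (hmin : ∀ i < k, f k < f i)
    (hdec : ∀ i j, i < j → j < k → f j < f i) : StrictAntiOn f (Iic k) := by
  intro i _ j hj hij
  rcases (mem_Iic.1 hj).lt_or_eq with hjk | rfl
  · exact hdec i j hij hjk
  · exact hmin i hij

theorem strictMonoOn_Ici_of_forall_lt (hmin : ∀ j, k < j → f k < f j)
    (hinc : ∀ i j, k < i → i < j → f i < f j) : StrictMonoOn f (Ici k) := by
  intro i hi j _ hij
  rcases (mem_Ici.1 hi).lt_or_eq with hki | rfl
  · exact hinc i j hki hij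
  · exact hmin j hij

theorem StrictAntiOn.strictMonoOn_Ici_of_covBy (hdec : StrictAntiOn f (Iic k))
    (hinc : StrictMonoOn f (Ici k)) (hij : i ⋖ j) (h : f i < f j) : StrictMonoOn f (Ici i) :=
  hinc.mono <| Ici_subset_Ici.2 <| by
    by_contra! hik
    exact (hdec hik.le (hij.ge_of_gt hik) hij.lt).asymm h

theorem StrictMonoOn.strictAntiOn_Iic_of_covBy (hinc : StrictMonoOn f (Ici k))
    (hdec : StrictAntiOn f (Iic k)) (hij : i ⋖ j) (h : f j < f i) : StrictAntiOn f (Iic j) :=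
  hdec.mono <| Iic_subset_Iic.2 <| by
    by_contra! hkj
    exact (hinc (hij.le_of_lt hkj) hkj.le hij.lt).asymm h

end Valley

theorem Fin.covBy_of_val_eq_add_one {n : ℕ} {i j : Fin n} (h : (j : ℕ) = i + 1) : i ⋖ j :=
  Fin.covBy_iff.2 (Nat.covBy_iff_add_one_eq.2 h.symm)

section Patterns

variable {n : ℕ} {π : Equiv.Perm (Fin n)} {k : Fin n}

theorem not_p3241 (hdec : StrictAntiOn π (Iic k)) (hinc : StrictMonoOn π (Ici k)) :
    ¬ P3241 π := by
  rintro ⟨i, i', j, j', -, hj, hi'j, h1, h2, h3⟩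
  have hjj' := Fin.covBy_of_val_eq_add_one hj
  have hanti := hinc.strictAntiOn_Iic_of_covBy hdec hjj' ((h1.trans h2).trans h3)
  exact lt_irrefl _ ((hanti (hi'j.le.trans hjj'.le) hjj'.le hi'j).trans (h2.trans h3))

theorem not_p1423 (hdec : StrictAntiOn π (Iic k)) (hinc : StrictMonoOn π (Ici k)) :
    ¬ P1423 π := by
  rintro ⟨i, i', j, j', hi, -, hi'j, h1, h2, h3⟩
  have hii' := Fin.covBy_of_val_eq_add_one hi
  have hmono := hdec.strictMonoOn_Ici_of_covBy hinc hii' ((h1.trans h2).trans h3)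
  exact lt_irrefl _ ((hmono hii'.le (hii'.le.trans hi'j.le) hi'j).trans (h2.trans h3))

theorem not_p4132 (hdec : StrictAntiOn π (Iic k)) (hinc : StrictMonoOn π (Ici k)) :
    ¬ P4132 π := by
  rintro ⟨i, i', j, j', -, hj, hi'j, h1, h2, -⟩
  have hjj' := Fin.covBy_of_val_eq_add_one hj
  have hanti := hinc.strictAntiOn_Iic_of_covBy hdec hjj' h2
  have hi'j' : i' < j' := lt_trans hi'j hjj'.lt
  exact (hanti hi'j'.le self_mem_Iic hi'j').asymm h1

theorem not_p2314 (hdec : StrictAntiOn π (Iic k)) (hinc : StrictMonoOn π (Ici k)) :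
    ¬ P2314 π := by
  rintro ⟨i, i', j, j', hi, -, hi'j, h1, h2, -⟩
  have hii' := Fin.covBy_of_val_eq_add_one hi
  have hmono := hdec.strictMonoOn_Ici_of_covBy hinc hii' h2
  exact lt_irrefl _ ((hmono hii'.le (hii'.le.trans hi'j.le) hi'j).trans (h1.trans h2))

theorem not_p231final (hdec : StrictAntiOn π (Iic k)) (hinc : StrictMonoOn π (Ici k)) :
    ¬ P231final π := by
  rintro ⟨i, i', l, hi, -, hi'l, h1, h2⟩
  have hii' := Fin.covBy_of_val_eq_add_one hi
  have hmono := hdec.strictMonoOn_Ici_of_covBy hinc hii' h2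
  exact lt_irrefl _ ((hmono hii'.le (hii'.le.trans hi'l.le) hi'l).trans (h1.trans h2))

theorem not_p132initial (hdec : StrictAntiOn π (Iic k)) (hinc : StrictMonoOn π (Ici k)) :
    ¬ P132initial π := by
  rintro ⟨f, j, j', hf, hj, hj0, h1, h2⟩
  have hjj' := Fin.covBy_of_val_eq_add_one hj
  have hanti := hinc.strictAntiOn_Iic_of_covBy hdec hjj' h2
  have hfj' : f < j' := Fin.lt_def.2 (by omega)
  exact (hanti hfj'.le self_mem_Iic hfj').asymm h1

end Patterns

/-- The value `1` of one-line notation is `0 : Fin n`. -/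
theorem decreasing_one_increasing_memA (n : ℕ) (π : Equiv.Perm (Fin n)) (k : Fin n)
    (hk : (π k : ℕ) = 0)
    (hdec : ∀ i j : Fin n, i < j → j < k → π j < π i)
    (hinc : ∀ i j : Fin n, k < i → i < j → π i < π j) :
    MemA π := by
  have hmin : ∀ i, i ≠ k → π k < π i := fun i hi =>
    Fin.lt_def.2 (hk ▸ Nat.pos_of_ne_zero fun h => hi (π.injective (Fin.ext (h.trans hk.symm))))
  have hanti := strictAntiOn_Iic_of_forall_lt (fun i hi => hmin i hi.ne) hdec
  have hmono := strictMonoOn_Ici_of_forall_lt (fun j hj => hmin j hj.ne') hinc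
  exact ⟨not_p3241 hanti hmono, not_p1423 hanti hmono, not_p4132 hanti hmono,
    not_p2314 hanti hmono, not_p231final hanti hmono, not_p132initial hanti hmono⟩
end

section
/- If π ∈ A_n (avoids the six vincular patterns ⟨32⟩⟨41⟩, ⟨14⟩⟨23⟩, ⟨41⟩⟨32⟩, ⟨23⟩⟨14⟩, ⟨23⟩·⟨1⟩(final), ⟨1⟩(initial)·⟨32⟩), then it is not the case that both π_1 < π_2 and π_{n−1} > π_n. -/
/-! Compare the last entry with the first. If `π_n < π_1`, then `π_1 π_2 … π_n` is an occurrence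
of ⟨23⟩⟨1⟩ with final `1`; if `π_1 < π_n`, then `π_1 … π_{n-1} π_n` is an occurrence of
⟨1⟩⟨32⟩ with initial `1`. For `n = 2` the ascent and the descent are the same pair. -/

theorem p231final_of_ascent_of_last_lt_first {n : ℕ} (hn : 3 ≤ n) (π : Equiv.Perm (Fin n))
    (hasc : π ⟨0, by omega⟩ < π ⟨1, by omega⟩)
    (hlast : π ⟨n - 1, by omega⟩ < π ⟨0, by omega⟩) :
    P231final π :=
  ⟨⟨0, by omega⟩, ⟨1, by omega⟩, ⟨n - 1, by omega⟩, rfl, rfl, by simp only; omega, hlast, hasc⟩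

theorem p132initial_of_descent_of_first_lt_last {n : ℕ} (hn : 3 ≤ n) (π : Equiv.Perm (Fin n))
    (hdesc : π ⟨n - 1, by omega⟩ < π ⟨n - 2, by omega⟩)
    (hfirst : π ⟨0, by omega⟩ < π ⟨n - 1, by omega⟩) :
    P132initial π :=
  ⟨⟨0, by omega⟩, ⟨n - 2, by omega⟩, ⟨n - 1, by omega⟩, rfl, by simp only; omega,
    by simp only; omega, hfirst, hdesc⟩

/-- If `π ∈ A_n` then it is not the case that both `π₁ < π₂` and `π_{n−1} > π_n`. -/
theorem memA_not_ascent_descent (n : ℕ) (hn : 2 ≤ n) (π : Equiv.Perm (Fin n))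
    (h : MemA π) :
    ¬ (π ⟨0, by omega⟩ < π ⟨1, by omega⟩ ∧
        π ⟨n - 1, by omega⟩ < π ⟨n - 2, by omega⟩) := by
  rintro ⟨hasc, hdesc⟩
  obtain rfl | hn3 : n = 2 ∨ 3 ≤ n := by omega
  · exact lt_asymm hasc hdesc
  have hne : π ⟨n - 1, by omega⟩ ≠ π ⟨0, by omega⟩ := by
    rw [Ne, π.injective.eq_iff, Fin.mk.injEq]
    omega
  rcases hne.lt_or_gt with hlast | hfirst
  · exact h.2.2.2.2.1 (p231final_of_ascent_of_last_lt_first hn3 π hasc hlast)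
  · exact h.2.2.2.2.2 (p132initial_of_descent_of_first_lt_last hn3 π hdesc hfirst)
end

section
/- If π ∈ A_n and σ ∈ A_m, then the inflation π[σ] of π at the value 1 by σ lies in A_{n+m−1}. -/
/-!
Cut the positions of `τ = π[σ]` into the block `[k, k + m)` carrying `σ` and the rest, which
carries the entries of `π` other than its minimum. Every value in the block is smaller than every
value outside it, so the block positions of a pattern occurrence in `τ` form a down-set of its
values; since they also form an interval of its positions, the occurrence either lies inside the
block (an occurrence of the same pattern in `σ`), has at most one entry in the block (collapsing
the block to the position `k` of the minimum of `π` gives an occurrence in `π`), or, for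
⟨41⟩⟨32⟩ and ⟨23⟩⟨14⟩, meets the block in the three entries that give an occurrence of
⟨1 initial⟩⟨32⟩ or ⟨23⟩⟨1 final⟩ in `σ`.
-/

open Equiv Set

/-- `τ` is the inflation `π[σ]`, where `k` is the position of the minimum of `π`. -/
structure IsInflation {n m : ℕ} (π : Perm (Fin n)) (σ : Perm (Fin m)) (k : Fin n)
    (τ : Perm (Fin (n + m - 1))) : Prop where
  apply_eq_zero : (π k : ℕ) = 0
  left : ∀ i : Fin n, (hik : (i : ℕ) < k) → (τ ⟨i, by omega⟩ : ℕ) = π i + (m - 1)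
  block : ∀ j : Fin m, (τ ⟨k + j, by omega⟩ : ℕ) = σ j
  right : ∀ i : Fin n, (hik : (k : ℕ) < i) → (τ ⟨i + m - 1, by omega⟩ : ℕ) = π i + (m - 1)

namespace IsInflation

variable {n m : ℕ} {k : Fin n}

/-- The position of `π` that position `p` of `π[σ]` comes from; the block collapses to `k`. -/
def proj (k : Fin n) (m : ℕ) (p : Fin (n + m - 1)) : Fin n :=
  if h : (p : ℕ) < k then ⟨p, by omega⟩
  else if (p : ℕ) < k + m then k else ⟨p + 1 - m, by have := k.isLt; omega⟩

theorem proj_spec (p : Fin (n + m - 1)) :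
    ((p : ℕ) < k ∧ (proj k m p : ℕ) = p) ∨
    ((k : ℕ) ≤ p ∧ (p : ℕ) < k + m ∧ (proj k m p : ℕ) = k) ∨
    ((k : ℕ) + m ≤ p ∧ (proj k m p : ℕ) + m = p + 1) := by
  unfold proj
  split_ifs with h₁ h₂
  · exact Or.inl ⟨h₁, rfl⟩
  · exact Or.inr (Or.inl ⟨by omega, h₂, rfl⟩)
  · exact Or.inr (Or.inr ⟨by omega, by simp only; omega⟩)

theorem proj_of_mem {p : Fin (n + m - 1)} (hp : (p : ℕ) ∈ Ico (k : ℕ) (k + m)) :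
    proj k m p = k := by
  rw [mem_Ico] at hp
  apply Fin.ext
  rcases proj_spec (k := k) p with h | h | h <;> omega

theorem proj_ne_of_not_mem {p : Fin (n + m - 1)} (hp : (p : ℕ) ∉ Ico (k : ℕ) (k + m)) :
    proj k m p ≠ k := by
  rw [mem_Ico] at hp
  rw [Ne, Fin.ext_iff]
  rcases proj_spec (k := k) p with h | h | h <;> omega

theorem proj_lt_proj {p q : Fin (n + m - 1)} (hpq : (p : ℕ) < q)
    (hpq' : ¬((p : ℕ) ∈ Ico (k : ℕ) (k + m) ∧ (q : ℕ) ∈ Ico (k : ℕ) (k + m))) :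
    (proj k m p : ℕ) < proj k m q := by
  rw [mem_Ico, mem_Ico] at hpq'
  rcases proj_spec (k := k) p with h | h | h <;> rcases proj_spec (k := k) q with h' | h' | h' <;>
    omega

theorem proj_succ (hm : 1 ≤ m) {p q : Fin (n + m - 1)} (hpq : (q : ℕ) = p + 1)
    (hpq' : ¬((p : ℕ) ∈ Ico (k : ℕ) (k + m) ∧ (q : ℕ) ∈ Ico (k : ℕ) (k + m))) :
    (proj k m q : ℕ) = proj k m p + 1 := by
  rw [mem_Ico, mem_Ico] at hpq'
  rcases proj_spec (k := k) p with h | h | h <;> rcases proj_spec (k := k) q with h' | h' | h' <;>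
    omega

theorem proj_of_eq_zero (hm : 1 ≤ m) {p : Fin (n + m - 1)} (hp : (p : ℕ) = 0) :
    (proj k m p : ℕ) = 0 := by
  rcases proj_spec (k := k) p with h | h | h <;> omega

theorem proj_of_eq_last (hm : 1 ≤ m) {p : Fin (n + m - 1)} (hp : (p : ℕ) = n + m - 1 - 1) :
    (proj k m p : ℕ) = n - 1 := by
  have := k.isLt
  rcases proj_spec (k := k) p with h | h | h <;> omega

variable {π : Perm (Fin n)} {σ : Perm (Fin m)} {τ : Perm (Fin (n + m - 1))}

theorem val_of_not_mem (hτ : IsInflation π σ k τ) {p : Fin (n + m - 1)}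
    (hp : (p : ℕ) ∉ Ico (k : ℕ) (k + m)) : (τ p : ℕ) = π (proj k m p) + (m - 1) := by
  rw [mem_Ico] at hp
  rcases proj_spec (k := k) p with ⟨hpk, h⟩ | ⟨hpk, hpk', -⟩ | ⟨hpk, h⟩
  · have := hτ.left (proj k m p) (by omega)
    rwa [show (⟨proj k m p, _⟩ : Fin (n + m - 1)) = p from Fin.ext h] at this
  · exact absurd ⟨hpk, hpk'⟩ hp
  · have := hτ.right (proj k m p) (by omega)
    rwa [show (⟨proj k m p + m - 1, _⟩ : Fin (n + m - 1)) = p from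
      Fin.ext (by simp only; omega)] at this

theorem exists_val_of_mem (hτ : IsInflation π σ k τ) {p : Fin (n + m - 1)}
    (hp : (p : ℕ) ∈ Ico (k : ℕ) (k + m)) : ∃ c : Fin m, (k : ℕ) + c = p ∧ (τ p : ℕ) = σ c := by
  rw [mem_Ico] at hp
  refine ⟨⟨p - k, by omega⟩, by simp only; omega, ?_⟩
  have := hτ.block ⟨p - k, by omega⟩
  rwa [show (⟨k + (p - k : ℕ), _⟩ : Fin (n + m - 1)) = p from
    Fin.ext (by simp only; omega)] at this

theorem one_le_apply_proj (hτ : IsInflation π σ k τ) {p : Fin (n + m - 1)}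
    (hp : (p : ℕ) ∉ Ico (k : ℕ) (k + m)) : 1 ≤ (π (proj k m p) : ℕ) := by
  by_contra! h
  exact proj_ne_of_not_mem hp
    (π.injective (Fin.ext (by rw [hτ.apply_eq_zero]; omega)))

theorem mem_of_lt_of_mem (hτ : IsInflation π σ k τ) {p q : Fin (n + m - 1)} (hpq : τ p < τ q)
    (hq : (q : ℕ) ∈ Ico (k : ℕ) (k + m)) : (p : ℕ) ∈ Ico (k : ℕ) (k + m) := by
  by_contra hp
  obtain ⟨c, -, hc⟩ := hτ.exists_val_of_mem hq
  have := hτ.val_of_not_mem hp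
  have := hτ.one_le_apply_proj hp
  have := c.isLt
  omega

theorem apply_proj_lt (hτ : IsInflation π σ k τ) {p q : Fin (n + m - 1)} (hpq : τ p < τ q)
    (hpq' : ¬((p : ℕ) ∈ Ico (k : ℕ) (k + m) ∧ (q : ℕ) ∈ Ico (k : ℕ) (k + m))) :
    π (proj k m p) < π (proj k m q) := by
  have hq : (q : ℕ) ∉ Ico (k : ℕ) (k + m) := fun hq => hpq' ⟨hτ.mem_of_lt_of_mem hpq hq, hq⟩
  have := hτ.val_of_not_mem hq
  have := hτ.one_le_apply_proj hq
  by_cases hp : (p : ℕ) ∈ Ico (k : ℕ) (k + m)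
  · have := hτ.apply_eq_zero
    rw [Fin.lt_def, proj_of_mem hp]
    omega
  · have := hτ.val_of_not_mem hp
    rw [Fin.lt_def] at hpq ⊢
    omega

theorem not_P3241 (hτ : IsInflation π σ k τ) (hm : 1 ≤ m) (hπ : ¬P3241 π) (hσ : ¬P3241 σ) :
    ¬P3241 τ := by
  rintro ⟨i, i', j, j', hi, hj, hij, v₁, v₂, v₃⟩
  have d₁ := hτ.mem_of_lt_of_mem v₁
  have d₂ := hτ.mem_of_lt_of_mem v₂
  have d₃ := hτ.mem_of_lt_of_mem v₃
  by_cases hj_mem : (j : ℕ) ∈ Ico (k : ℕ) (k + m)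
  · obtain ⟨a, ha, ta⟩ := hτ.exists_val_of_mem (d₃ hj_mem)
    obtain ⟨a', ha', ta'⟩ := hτ.exists_val_of_mem (d₂ (d₃ hj_mem))
    obtain ⟨b, hb, tb⟩ := hτ.exists_val_of_mem hj_mem
    obtain ⟨b', hb', tb'⟩ := hτ.exists_val_of_mem (d₁ (d₂ (d₃ hj_mem)))
    exact hσ ⟨a, a', b, b', by omega, by omega, by omega, by omega, by omega, by omega⟩
  · refine hπ ⟨_, _, _, _, proj_succ hm hi ?_, proj_succ hm hj ?_, proj_lt_proj hij ?_,
      hτ.apply_proj_lt v₁ ?_, hτ.apply_proj_lt v₂ ?_, hτ.apply_proj_lt v₃ ?_⟩ <;>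
    simp only [mem_Ico] at * <;> omega

theorem not_P1423 (hτ : IsInflation π σ k τ) (hm : 1 ≤ m) (hπ : ¬P1423 π) (hσ : ¬P1423 σ) :
    ¬P1423 τ := by
  rintro ⟨i, i', j, j', hi, hj, hij, v₁, v₂, v₃⟩
  have d₁ := hτ.mem_of_lt_of_mem v₁
  have d₂ := hτ.mem_of_lt_of_mem v₂
  have d₃ := hτ.mem_of_lt_of_mem v₃
  by_cases hi'_mem : (i' : ℕ) ∈ Ico (k : ℕ) (k + m)
  · obtain ⟨a, ha, ta⟩ := hτ.exists_val_of_mem (d₁ (d₂ (d₃ hi'_mem)))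
    obtain ⟨a', ha', ta'⟩ := hτ.exists_val_of_mem hi'_mem
    obtain ⟨b, hb, tb⟩ := hτ.exists_val_of_mem (d₂ (d₃ hi'_mem))
    obtain ⟨b', hb', tb'⟩ := hτ.exists_val_of_mem (d₃ hi'_mem)
    exact hσ ⟨a, a', b, b', by omega, by omega, by omega, by omega, by omega, by omega⟩
  · refine hπ ⟨_, _, _, _, proj_succ hm hi ?_, proj_succ hm hj ?_, proj_lt_proj hij ?_,
      hτ.apply_proj_lt v₁ ?_, hτ.apply_proj_lt v₂ ?_, hτ.apply_proj_lt v₃ ?_⟩ <;>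
    simp only [mem_Ico] at * <;> omega

theorem not_P4132 (hτ : IsInflation π σ k τ) (hm : 1 ≤ m) (hπ : ¬P4132 π) (hσ : ¬P4132 σ)
    (hσ' : ¬P132initial σ) : ¬P4132 τ := by
  rintro ⟨i, i', j, j', hi, hj, hij, v₁, v₂, v₃⟩
  have d₁ := hτ.mem_of_lt_of_mem v₁
  have d₂ := hτ.mem_of_lt_of_mem v₂
  have d₃ := hτ.mem_of_lt_of_mem v₃
  by_cases hi_mem : (i : ℕ) ∈ Ico (k : ℕ) (k + m)
  · obtain ⟨a, ha, ta⟩ := hτ.exists_val_of_mem hi_mem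
    obtain ⟨a', ha', ta'⟩ := hτ.exists_val_of_mem (d₁ (d₂ (d₃ hi_mem)))
    obtain ⟨b, hb, tb⟩ := hτ.exists_val_of_mem (d₃ hi_mem)
    obtain ⟨b', hb', tb'⟩ := hτ.exists_val_of_mem (d₂ (d₃ hi_mem))
    exact hσ ⟨a, a', b, b', by omega, by omega, by omega, by omega, by omega, by omega⟩
  by_cases hj_mem : (j : ℕ) ∈ Ico (k : ℕ) (k + m)
  · -- `i'` is the first position of the block
    obtain ⟨a', ha', ta'⟩ := hτ.exists_val_of_mem (d₁ (d₂ hj_mem))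
    obtain ⟨b, hb, tb⟩ := hτ.exists_val_of_mem hj_mem
    obtain ⟨b', hb', tb'⟩ := hτ.exists_val_of_mem (d₂ hj_mem)
    simp only [mem_Ico] at hi_mem
    exact hσ' ⟨a', b, b', by omega, by omega, by omega, by omega, by omega⟩
  · refine hπ ⟨_, _, _, _, proj_succ hm hi ?_, proj_succ hm hj ?_, proj_lt_proj hij ?_,
      hτ.apply_proj_lt v₁ ?_, hτ.apply_proj_lt v₂ ?_, hτ.apply_proj_lt v₃ ?_⟩ <;>
    simp only [mem_Ico] at * <;> omega

theorem not_P2314 (hτ : IsInflation π σ k τ) (hm : 1 ≤ m) (hπ : ¬P2314 π) (hσ : ¬P2314 σ)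
    (hσ' : ¬P231final σ) : ¬P2314 τ := by
  rintro ⟨i, i', j, j', hi, hj, hij, v₁, v₂, v₃⟩
  have d₁ := hτ.mem_of_lt_of_mem v₁
  have d₂ := hτ.mem_of_lt_of_mem v₂
  have d₃ := hτ.mem_of_lt_of_mem v₃
  by_cases hj'_mem : (j' : ℕ) ∈ Ico (k : ℕ) (k + m)
  · obtain ⟨a, ha, ta⟩ := hτ.exists_val_of_mem (d₂ (d₃ hj'_mem))
    obtain ⟨a', ha', ta'⟩ := hτ.exists_val_of_mem (d₃ hj'_mem)
    obtain ⟨b, hb, tb⟩ := hτ.exists_val_of_mem (d₁ (d₂ (d₃ hj'_mem)))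
    obtain ⟨b', hb', tb'⟩ := hτ.exists_val_of_mem hj'_mem
    exact hσ ⟨a, a', b, b', by omega, by omega, by omega, by omega, by omega, by omega⟩
  by_cases hi'_mem : (i' : ℕ) ∈ Ico (k : ℕ) (k + m)
  · -- `j` is the last position of the block
    obtain ⟨a, ha, ta⟩ := hτ.exists_val_of_mem (d₂ hi'_mem)
    obtain ⟨a', ha', ta'⟩ := hτ.exists_val_of_mem hi'_mem
    obtain ⟨b, hb, tb⟩ := hτ.exists_val_of_mem (d₁ (d₂ hi'_mem))
    simp only [mem_Ico] at hj'_mem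
    exact hσ' ⟨a, a', b, by omega, by omega, by omega, by omega, by omega⟩
  · refine hπ ⟨_, _, _, _, proj_succ hm hi ?_, proj_succ hm hj ?_, proj_lt_proj hij ?_,
      hτ.apply_proj_lt v₁ ?_, hτ.apply_proj_lt v₂ ?_, hτ.apply_proj_lt v₃ ?_⟩ <;>
    simp only [mem_Ico] at * <;> omega

theorem not_P231final (hτ : IsInflation π σ k τ) (hm : 1 ≤ m) (hπ : ¬P231final π)
    (hσ : ¬P231final σ) : ¬P231final τ := by
  rintro ⟨i, i', l, hi, hl, hil, v₁, v₂⟩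
  have d₁ := hτ.mem_of_lt_of_mem v₁
  have d₂ := hτ.mem_of_lt_of_mem v₂
  by_cases hi'_mem : (i' : ℕ) ∈ Ico (k : ℕ) (k + m)
  · obtain ⟨a, ha, ta⟩ := hτ.exists_val_of_mem (d₂ hi'_mem)
    obtain ⟨a', ha', ta'⟩ := hτ.exists_val_of_mem hi'_mem
    obtain ⟨c, hc, tc⟩ := hτ.exists_val_of_mem (d₁ (d₂ hi'_mem))
    have := k.isLt
    exact hσ ⟨a, a', c, by omega, by omega, by omega, by omega, by omega⟩
  · refine hπ ⟨_, _, _, proj_succ hm hi ?_, proj_of_eq_last hm hl, proj_lt_proj hil ?_,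
      hτ.apply_proj_lt v₁ ?_, hτ.apply_proj_lt v₂ ?_⟩ <;>
    simp only [mem_Ico] at * <;> omega

theorem not_P132initial (hτ : IsInflation π σ k τ) (hm : 1 ≤ m) (hπ : ¬P132initial π)
    (hσ : ¬P132initial σ) : ¬P132initial τ := by
  rintro ⟨f, j, j', hf, hj, hj_pos, v₁, v₂⟩
  have d₁ := hτ.mem_of_lt_of_mem v₁
  have d₂ := hτ.mem_of_lt_of_mem v₂
  by_cases hj_mem : (j : ℕ) ∈ Ico (k : ℕ) (k + m)
  · obtain ⟨c, hc, tc⟩ := hτ.exists_val_of_mem (d₁ (d₂ hj_mem))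
    obtain ⟨b, hb, tb⟩ := hτ.exists_val_of_mem hj_mem
    obtain ⟨b', hb', tb'⟩ := hτ.exists_val_of_mem (d₂ hj_mem)
    exact hσ ⟨c, b, b', by omega, by omega, by omega, by omega, by omega⟩
  · refine hπ ⟨_, _, _, proj_of_eq_zero hm hf, proj_succ hm hj ?_,
      (proj_of_eq_zero hm hf).symm.trans_lt (proj_lt_proj (show (f : ℕ) < j by omega) ?_),
      hτ.apply_proj_lt v₁ ?_, hτ.apply_proj_lt v₂ ?_⟩ <;>
    simp only [mem_Ico] at * <;> omega

theorem memA (hτ : IsInflation π σ k τ) (hm : 1 ≤ m) (hπ : MemA π) (hσ : MemA σ) :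
    MemA τ :=
  let ⟨hπ₁, hπ₂, hπ₃, hπ₄, hπ₅, hπ₆⟩ := hπ
  let ⟨hσ₁, hσ₂, hσ₃, hσ₄, hσ₅, hσ₆⟩ := hσ
  ⟨hτ.not_P3241 hm hπ₁ hσ₁, hτ.not_P1423 hm hπ₂ hσ₂, hτ.not_P4132 hm hπ₃ hσ₃ hσ₆,
    hτ.not_P2314 hm hπ₄ hσ₄ hσ₅, hτ.not_P231final hm hπ₅ hσ₅, hτ.not_P132initial hm hπ₆ hσ₆⟩

end IsInflation

/-- If `π ∈ A_n` and `σ ∈ A_m`, then the inflation `π[σ]` of `π` at the value `1`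
by `σ` lies in `A_{n+m−1}`.  Here `τ : S_{n+m−1}` is the inflation: if `k` is the
position of the minimal entry of `π` (the value `1`, i.e. `0 : Fin n`), then the
entries of `π` before position `k` appear shifted up by `m − 1`, then the block `σ`,
then the remaining entries of `π` shifted up by `m − 1`. -/
theorem inflation_memA (n m : ℕ) (hm : 1 ≤ m)
    (π : Equiv.Perm (Fin n)) (σ : Equiv.Perm (Fin m))
    (hπ : MemA π) (hσ : MemA σ)
    (k : Fin n) (hk : (π k : ℕ) = 0)
    (τ : Equiv.Perm (Fin (n + m - 1)))
    (h1 : ∀ i : Fin n, (hik : (i : ℕ) < (k : ℕ)) →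
      (τ ⟨(i : ℕ), by omega⟩ : ℕ) = (π i : ℕ) + (m - 1))
    (h2 : ∀ j : Fin m,
      (τ ⟨(k : ℕ) + (j : ℕ), by have := k.isLt; have := j.isLt; omega⟩ : ℕ) = (σ j : ℕ))
    (h3 : ∀ i : Fin n, (hik : (k : ℕ) < (i : ℕ)) →
      (τ ⟨(i : ℕ) + m - 1, by have := i.isLt; omega⟩ : ℕ) = (π i : ℕ) + (m - 1)) :
    MemA τ :=
  IsInflation.memA ⟨hk, h1, h2, h3⟩ hm hπ hσ
end
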